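/- Fix (x₀,y₀) ∈ ℝ² and let V be the 4×4 real matrix with rows (1,0,0,0), (x₀²+y₀², 1, x₀, y₀), (2x₀, 0, 1, 0), (2y₀, 0, 0, 1). Then: (a) Vᵀ·Q_W·V = Q_W, i.e. V ∈ Aut(Q_W); and (b) for every nonzero b ∈ ℝ and every (x,y) ∈ ℝ², the ACC row vector of the translated circle satisfies w(b, x+x₀, y+y₀) = w(b, x, y)·V, where w(b,x,y) = (b(x²+y²) − 1/b, b, bx, by). Thus translation of the plane by (x₀,y₀) acts on augmented curvature-center coordinates by right multiplication by V. -/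

import Mathlib

open Matrix

/-- The matrix of the Wilker quadratic form. -/
noncomputable def QW : Matrix (Fin 4) (Fin 4) ℝ :=
  !![0, -4, 0, 0; -4, 0, 0, 0; 0, 0, 2, 0; 0, 0, 0, 2]

/-- The augmented curvature-center coordinate (ACC) row vector of an oriented
circle with nonzero signed curvature `b` and center `(x, y)`. -/
noncomputable def acc (b x y : ℝ) : Fin 4 → ℝ :=
  ![b * (x ^ 2 + y ^ 2) - 1 / b, b, b * x, b * y]

/-- The first column comes from expanding
`b((x + x₀)² + (y + y₀)²) = b(x² + y²) + b(x₀² + y₀²) + 2x₀·bx + 2y₀·by`. -/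
def translationMatrix (x₀ y₀ : ℝ) : Matrix (Fin 4) (Fin 4) ℝ :=
  !![1, 0, 0, 0;
     x₀ ^ 2 + y₀ ^ 2, 1, x₀, y₀;
     2 * x₀, 0, 1, 0;
     2 * y₀, 0, 0, 1]

theorem translationMatrix_transpose_mul_QW_mul (x₀ y₀ : ℝ) :
    (translationMatrix x₀ y₀)ᵀ * QW * translationMatrix x₀ y₀ = QW := by
  ext i j
  fin_cases i <;> fin_cases j <;>
    simp [translationMatrix, QW, mul_apply, Fin.sum_univ_four] <;> ring

theorem acc_add (b x y x₀ y₀ : ℝ) :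
    acc b (x + x₀) (y + y₀) = vecMul (acc b x y) (translationMatrix x₀ y₀) := by
  ext i
  fin_cases i <;> simp [acc, translationMatrix, vecMul, dotProduct, Fin.sum_univ_four] <;> ring

/-- Translation of the plane by `(x₀, y₀)` acts on augmented curvature-center
coordinates by right multiplication by the matrix `V` below, which lies in
`Aut(Q_W)`. -/
theorem translation_acts_on_acc (x₀ y₀ : ℝ)
    (V : Matrix (Fin 4) (Fin 4) ℝ)
    (hV : V = !![1, 0, 0, 0;
                 x₀ ^ 2 + y₀ ^ 2, 1, x₀, y₀;
                 2 * x₀, 0, 1, 0;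
                 2 * y₀, 0, 0, 1]) :
    Vᵀ * QW * V = QW ∧
    ∀ b x y : ℝ, b ≠ 0 →
      acc b (x + x₀) (y + y₀) = Matrix.vecMul (acc b x y) V := by
  rw [hV, ← translationMatrix]
  exact ⟨translationMatrix_transpose_mul_QW_mul x₀ y₀,
    fun b x y _ => acc_add b x y x₀ y₀⟩
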